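/- Let G be a finite simple graph on vertices {1,…,n} with adjacency matrix A over Z_2. Suppose vertex 1 is isolated. Then for every subset s containing 1, corank A(G(s)) = corank A(G(s\{1})) + 1, and consequently the Kauffman bracket factorizes: ⟨G⟩ = (ε a^{ε} + ε a^{−ε}(−a^2−a^{−2}))·⟨G\{1}⟩ up to the sign conventions, where ε = +1 if vertex 1 is labeled + and the factor equals −a^{−3}, and ε = −1 if labeled − with factor −a^{3}; here G\{1} is G with vertex 1 deleted and ⟨·⟩ is the graph Kauffman bracket. -/

import Mathlib

open Matrix LaurentPolynomial
open scoped Classical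

noncomputable section

def adjMatS {V : Type} (G : SimpleGraph V) (s : Finset V) : Matrix s s (ZMod 2) :=
  fun i j => if G.Adj i.1 j.1 then 1 else 0

def corankS {V : Type} (G : SimpleGraph V) (s : Finset V) : ℕ :=
  s.card - (adjMatS G s).rank

def adjMat {V : Type} [Fintype V] (G : SimpleGraph V) : Matrix V V (ZMod 2) :=
  fun i j => if G.Adj i j then 1 else 0

def corankM {m : Type} [Fintype m] (M : Matrix m m (ZMod 2)) : ℕ :=
  Fintype.card m - M.rank

def alphaCount {V : Type} [Fintype V] (σ : V → Bool) (s : Finset V) : ℕ :=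
  (s.filter (fun i => σ i = false)).card + ((sᶜ).filter (fun i => σ i = true)).card

def bracket {V : Type} [Fintype V] (G : SimpleGraph V) (σ : V → Bool) : LaurentPolynomial ℚ :=
  ∑ s : Finset V, T (2 * (alphaCount σ s : ℤ) - (Fintype.card V : ℤ)) *
    (-T 2 - T (-2)) ^ (corankS G s)

def lspan (p : LaurentPolynomial ℚ) : ℤ := (p.coeff.support.max.unbotD 0) - (p.coeff.support.min.untopD 0)

def Bmat {V : Type} [Fintype V] (G : SimpleGraph V) (x : V) : Matrix V V (ZMod 2) :=
  adjMat G + 1 + Matrix.single x x 1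

def writhe {V : Type} [Fintype V] (G : SimpleGraph V) (σ : V → Bool) : ℤ :=
  ∑ x, (-1 : ℤ) ^ (corankM (Bmat G x)) * (if σ x then 1 else -1)

def extAdj {V : Type} (G : SimpleGraph V) (N : Set V) : V ⊕ Bool → V ⊕ Bool → Prop
  | .inl i, .inl j => G.Adj i j
  | .inl i, .inr _ => i ∈ N
  | .inr _, .inl j => j ∈ N
  | .inr _, .inr _ => False

def ext2 {V : Type} (G : SimpleGraph V) (N : Set V) : SimpleGraph (V ⊕ Bool) where
  Adj := extAdj G N
  symm := by
    constructor
    rintro (i|b) (j|c) h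
    · exact G.adj_symm h
    · exact h
    · exact h
    · exact h
  loopless := by
    constructor
    rintro (i|b) h
    · exact G.loopless.irrefl _ h
    · exact h

def optExt {V : Type} (G : SimpleGraph V) : SimpleGraph (Option V) where
  Adj x y := match x, y with
    | some i, some j => G.Adj i j
    | _, _ => False
  symm := by
    constructor
    rintro (_|i) (_|j) h
    · exact h
    · exact h
    · exact h
    · exact G.adj_symm h
  loopless := by
    constructor
    rintro (_|i) h
    · exact h
    · exact G.loopless.irrefl _ h

/-! An isolated vertex `v` gives a zero row and column in the adjacency matrix of every state
containing it, so removing `v` from such a state keeps the rank and lowers the size by one.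
Pairing each state `t` of `G ∖ v` with the two states `t` and `t ∪ {v}` of `G`, the exponent
`2α - m` changes by `±1` and the corank by `0` or `1`, so each pair contributes the term of `t`
times `a^{±1} + a^{∓1}(-a² - a⁻²) = -a^{∓3}`. -/

open Finset

namespace Matrix

variable {m n p q R : Type*}

theorem rank_le_rank_submatrix_of_zero_off_range [CommSemiring R] [StrongRankCondition R]
    [Fintype n] [Fintype p] (A : Matrix m n R) {f : p → m} (hf : f.Injective)
    (hA : ∀ i, i ∉ Set.range f → A i = 0) : A.rank ≤ (A.submatrix f id).rank := by
  classical
  let B : Matrix m p R := of fun i a => if f a = i then 1 else 0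
  have hB : B * A.submatrix f id = A := by
    ext i j
    by_cases hi : i ∈ Set.range f
    · obtain ⟨a, rfl⟩ := hi
      rw [mul_apply, Fintype.sum_eq_single a fun b hb => by simp [B, hf.ne hb]]
      simp [B]
    · simp [B, mul_apply, hA i hi, show ∀ a, f a ≠ i from fun a h => hi ⟨a, h⟩]
  calc A.rank = (B * A.submatrix f id).rank := by rw [hB]
    _ ≤ (A.submatrix f id).rank := rank_mul_le_right _ _

theorem rank_submatrix_eq_of_zero_off_range [Field R] [Fintype m] [Fintype n] [Fintype p]
    [Fintype q] (A : Matrix m n R) {f : p → m} {g : q → n} (hf : f.Injective) (hg : g.Injective)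
    (hrow : ∀ i, i ∉ Set.range f → A i = 0) (hcol : ∀ j, j ∉ Set.range g → ∀ i, A i j = 0) :
    (A.submatrix f g).rank = A.rank := by
  refine le_antisymm (rank_submatrix_le _ _ _) ?_
  calc A.rank ≤ (A.submatrix f id).rank := rank_le_rank_submatrix_of_zero_off_range A hf hrow
    _ = (Aᵀ.submatrix id f).rank := by rw [← transpose_submatrix, rank_transpose]
    _ ≤ ((Aᵀ.submatrix id f).submatrix g id).rank :=
      rank_le_rank_submatrix_of_zero_off_range _ hg fun j hj => funext fun i => hcol j hj (f i)
    _ = (A.submatrix f g).rank := by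
      rw [submatrix_submatrix, ← transpose_submatrix, rank_transpose]
      rfl

end Matrix

namespace SimpleGraph

variable {V W : Type}

theorem corankS_eq_corankS_erase_add_one {G : SimpleGraph V} {v : V} (hiso : ∀ y, ¬ G.Adj v y)
    {s : Finset V} (hv : v ∈ s) : corankS G s = corankS G (s.erase v) + 1 := by
  let f : s.erase v → s := fun x => ⟨x, mem_of_mem_erase x.2⟩
  have hf : f.Injective := fun x y h => Subtype.ext (by simpa [f] using congrArg Subtype.val h)
  have hout : ∀ i : s, i ∉ Set.range f → i.1 = v := fun i hi => by
    by_contra hne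
    exact hi ⟨⟨i, mem_erase.2 ⟨hne, i.2⟩⟩, rfl⟩
  have hsub : adjMatS G (s.erase v) = (adjMatS G s).submatrix f f := rfl
  have hrank : (adjMatS G (s.erase v)).rank = (adjMatS G s).rank := by
    rw [hsub]
    exact (adjMatS G s).rank_submatrix_eq_of_zero_off_range hf hf
      (fun i hi => funext fun j => if_neg (hout i hi ▸ hiso j))
      (fun j hj i => if_neg fun h => hiso i (hout j hj ▸ h.symm))
  have hle := (adjMatS G (s.erase v)).rank_le_card_width
  rw [Fintype.card_coe] at hle
  unfold corankS
  rw [← hrank, ← card_erase_add_one hv]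
  omega

theorem corankS_map {H : SimpleGraph W} {G : SimpleGraph V} (φ : H ↪g G) (t : Finset W) :
    corankS G (t.map φ.toEmbedding) = corankS H t := by
  have : adjMatS H t = (adjMatS G (t.map φ.toEmbedding)).submatrix
      (t.equivMap φ.toEmbedding) (t.equivMap φ.toEmbedding) := by
    ext i j
    simp [adjMatS]
  simp [corankS, this]

end SimpleGraph

theorem Fintype.sum_finset_eq_sum_finset_subtype_ne {V M : Type*} [Fintype V] [DecidableEq V]
    [AddCommMonoid M] (v : V) (F : Finset V → M) :
    ∑ s, F s = ∑ t : Finset ↥{x | x ≠ v},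
      (F (t.map (.subtype _)) + F (insert v (t.map (.subtype _)))) := by
  have hmap : (univ : Finset (Finset ↥{x | x ≠ v})).map (mapEmbedding (.subtype _)).toEmbedding =
      (univ.erase v).powerset := by
    ext s
    simp only [mem_map, mem_univ, true_and, RelEmbedding.coe_toEmbedding, mapEmbedding_apply,
      mem_powerset]
    constructor
    · rintro ⟨t, rfl⟩ x hx
      obtain ⟨y, -, rfl⟩ := mem_map.1 hx
      exact mem_erase.2 ⟨y.2, mem_univ _⟩
    · intro hs
      exact ⟨s.subtype _, subtype_map_of_mem fun x hx => (mem_erase.1 (hs hx)).1⟩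
  rw [← powerset_univ, ← insert_erase (mem_univ v), sum_powerset_insert (notMem_erase v _),
    ← hmap, sum_map, sum_map, ← sum_add_distrib]
  rfl

theorem Fintype.sum_ite_one_neg_one {V : Type*} [Fintype V] (p : V → Prop) [DecidablePred p] :
    ∑ x, (if p x then 1 else -1 : ℤ) = 2 * #(univ.filter p) - Fintype.card V := by
  rw [sum_ite, ← card_univ, ← card_filter_add_card_filter_not p (s := univ)]
  simp only [sum_const, smul_neg, nsmul_one, Nat.cast_add]
  ring

theorem alphaCount_eq_card_filter {V : Type} [Fintype V] (σ : V → Bool) (s : Finset V) :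
    alphaCount σ s = #{x | x ∈ s ↔ σ x = false} := by
  rw [alphaCount, ← card_union_of_disjoint]
  · congr 1
    ext x
    by_cases hx : x ∈ s <;> simp [hx]
  · exact disjoint_filter_filter (disjoint_compl_right (a := s))

theorem two_mul_alphaCount_sub_card {V : Type} [Fintype V] (σ : V → Bool) (s : Finset V) :
    2 * (alphaCount σ s : ℤ) - Fintype.card V =
      ∑ x, if x ∈ s then (if σ x then -1 else 1) else (if σ x then 1 else -1) := by
  rw [alphaCount_eq_card_filter, ← Fintype.sum_ite_one_neg_one]
  refine sum_congr rfl fun x _ => ?_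
  by_cases hx : x ∈ s <;> cases σ x <;> simp [hx]

theorem two_mul_alphaCount_sub_card_eq_add {V : Type} [Fintype V] (σ : V → Bool) {v : V}
    {s : Finset V} {t : Finset ↥{x | x ≠ v}} (hst : ∀ x : ↥{x | x ≠ v}, x.1 ∈ s ↔ x ∈ t) :
    2 * (alphaCount σ s : ℤ) - Fintype.card V =
      (if v ∈ s then (if σ v then -1 else 1) else (if σ v then 1 else -1)) +
        (2 * (alphaCount (fun x => σ x.1) t : ℤ) - Fintype.card ↥{x | x ≠ v}) := by
  rw [two_mul_alphaCount_sub_card, two_mul_alphaCount_sub_card,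
    Fintype.sum_eq_add_sum_subtype_ne _ v]
  congr 1
  exact sum_congr rfl fun x _ => by simp only [hst x]; congr

/-- The bracket of a single vertex labeled `b`, from its two states `∅` and `{v}`;
`-T 2 - T (-2)` is the loop value `-a² - a⁻²`. -/
theorem LaurentPolynomial.T_add_T_mul_loop_eq {R : Type*} [CommRing R] (b : Bool) :
    (T (if b then 1 else -1) + T (if b then -1 else 1) * (-T 2 - T (-2)) : R[T;T⁻¹]) =
      if b then -T (-3) else -T 3 := by
  cases b <;> simp only [Bool.false_eq_true, if_true, if_false, mul_sub, mul_neg, ← T_add] <;>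
    ring_nf

/-- If `v` is an isolated vertex of `G`, then for every state containing `v`
the corank goes up by one, and the Kauffman bracket factorizes as
⟨G⟩ = -a^{-3}⟨G∖v⟩ if `v` is labeled `+`, and ⟨G⟩ = -a³⟨G∖v⟩ if labeled `-`. -/
theorem bracket_factor_isolated {V : Type} [Fintype V] (G : SimpleGraph V)
    (σ : V → Bool) (v : V) (hiso : ∀ y, ¬ G.Adj v y) :
    (∀ s : Finset V, v ∈ s → corankS G s = corankS G (s.erase v) + 1) ∧
    bracket G σ =
      (if σ v then -T (-3) else -T 3) *
        bracket (G.induce {x | x ≠ v}) (fun x => σ x.1) := by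
  refine ⟨fun s => SimpleGraph.corankS_eq_corankS_erase_add_one hiso, ?_⟩
  rw [bracket, bracket, mul_sum, Fintype.sum_finset_eq_sum_finset_subtype_ne v]
  refine sum_congr rfl fun t _ => ?_
  have hv : v ∉ t.map (.subtype _) := fun h => by simp at h
  have hmem : ∀ x : ↥{x | x ≠ v}, x.1 ∈ t.map (.subtype _) ↔ x ∈ t := fun x => mem_map' _
  have hmem_insert : ∀ x : ↥{x | x ≠ v}, x.1 ∈ insert v (t.map (.subtype _)) ↔ x ∈ t :=
    fun x => (mem_insert.trans (or_iff_right x.2)).trans (hmem x)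
  have hcorank : corankS G (t.map (.subtype _)) = corankS (G.induce {x | x ≠ v}) t :=
    SimpleGraph.corankS_map (SimpleGraph.Embedding.induce _) t
  rw [two_mul_alphaCount_sub_card_eq_add σ hmem, two_mul_alphaCount_sub_card_eq_add σ hmem_insert,
    SimpleGraph.corankS_eq_corankS_erase_add_one hiso (mem_insert_self v _), erase_insert hv,
    hcorank, T_add, T_add, ← LaurentPolynomial.T_add_T_mul_loop_eq]
  simp only [hv, mem_insert_self, if_true, if_false]
  ring
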